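/- Let 𝓐₁ ⊆ B(H₁) and 𝓐₂ ⊆ B(H₂) be unital operator algebras, and let 𝓐 = 𝓐₁ ⊕ 𝓐₂ = {T₁ ⊕ T₂ : T₁ ∈ 𝓐₁, T₂ ∈ 𝓐₂} acting on H₁ ⊕ H₂. If 𝓐₁ and 𝓐₂ both possess property (V), then 𝓐 possesses property (V). In particular, Lat 𝓐 = {L₁ ⊕ L₂ : L₁ ∈ Lat 𝓐₁, L₂ ∈ Lat 𝓐₂}, and for x = x₁ ⊕ x₂, y = y₁ ⊕ y₂ one has ‖ω_{x,y}|_𝓐‖ = ‖ω_{x₁,y₁}|_{𝓐₁}‖ + ‖ω_{x₂,y₂}|_{𝓐₂}‖. -/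

import Mathlib

noncomputable section

variable {H : Type*} [NormedAddCommGroup H] [InnerProductSpace ℂ H] [CompleteSpace H]

/-- An orthogonal projection: a self-adjoint idempotent bounded operator. -/
def IsOrthoProj (L : H →L[ℂ] H) : Prop := IsSelfAdjoint L ∧ L * L = L

/-- `Lat 𝓐`: the invariant projection lattice of a set of operators. -/
def latOf (𝓐 : Set (H →L[ℂ] H)) : Set (H →L[ℂ] H) :=
  {L | IsOrthoProj L ∧ ∀ T ∈ 𝓐, (1 - L) * T * L = 0}

/-- `‖ω_{x,y}|_𝓐‖ = sup {|⟨Tx, y⟩| : T ∈ 𝓐, ‖T‖ ≤ 1}`. -/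
def omegaNorm (𝓐 : Set (H →L[ℂ] H)) (x y : H) : ℝ :=
  sSup {r : ℝ | ∃ T ∈ 𝓐, ‖T‖ ≤ 1 ∧ r = ‖(inner ℂ (T x) y : ℂ)‖}

/-- Property (V) of a set of operators. -/
def PropertyV (𝓐 : Set (H →L[ℂ] H)) : Prop :=
  ∀ x y : H,
    sInf {r : ℝ | ∃ L ∈ latOf 𝓐, r = ‖x - L x‖ ^ 2 + ‖L y‖ ^ 2} ≤ omegaNorm 𝓐 x y

variable {H₁ H₂ : Type*} [NormedAddCommGroup H₁] [InnerProductSpace ℂ H₁] [CompleteSpace H₁]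
  [NormedAddCommGroup H₂] [InnerProductSpace ℂ H₂] [CompleteSpace H₂]

/-- The direct sum `T₁ ⊕ T₂` of two operators, acting on the Hilbert space direct sum
`H₁ ⊕ H₂ = WithLp 2 (H₁ × H₂)`. -/
def dsum (T₁ : H₁ →L[ℂ] H₁) (T₂ : H₂ →L[ℂ] H₂) :
    WithLp 2 (H₁ × H₂) →L[ℂ] WithLp 2 (H₁ × H₂) :=
  ((WithLp.prodContinuousLinearEquiv 2 ℂ H₁ H₂).symm : H₁ × H₂ →L[ℂ] WithLp 2 (H₁ × H₂)) ∘L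
    (T₁.prodMap T₂) ∘L
    ((WithLp.prodContinuousLinearEquiv 2 ℂ H₁ H₂) : WithLp 2 (H₁ × H₂) →L[ℂ] H₁ × H₂)

/-- A vector `x₁ ⊕ x₂ ∈ H₁ ⊕ H₂`. -/
def dvec (x₁ : H₁) (x₂ : H₂) : WithLp 2 (H₁ × H₂) :=
  (WithLp.equiv 2 (H₁ × H₂)).symm (x₁, x₂)

/-!
Everything splits along the two summands. A projection `L` invariant under `𝓐₁ ⊕ 𝓐₂` is
invariant under `P = 1 ⊕ 0`; then `(1 - L) P L = 0` gives `P L = L P L`, whose adjoint is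
`L P = L P L`, so `L` commutes with `P` and is block diagonal. For `L = L₁ ⊕ L₂` the quantity
`‖x - L x‖² + ‖L y‖²` is the sum of the corresponding quantities of the blocks. Finally
`‖T₁ ⊕ T₂‖ = max ‖T₁‖ ‖T₂‖`, so `ω_{x,y}` is at most the sum of the block norms by the triangle
inequality; conversely, rotating `T₁` and `T₂` by unimodular scalars makes both inner products
nonnegative, and then `|⟨(T₁ ⊕ T₂) x, y⟩| = |⟨T₁ x₁, y₁⟩| + |⟨T₂ x₂, y₂⟩|`.
-/

open scoped Pointwise ComplexConjugate

lemma commute_of_one_sub_mul_mul_eq_zero {R : Type*} [Ring R] [StarRing R] {P L : R}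
    (hP : IsSelfAdjoint P) (hL : IsSelfAdjoint L) (h : (1 - L) * P * L = 0) : Commute P L := by
  have hPL : P * L = L * P * L := by rwa [sub_mul, sub_mul, one_mul, sub_eq_zero] at h
  calc P * L = star (L * P * L) := by
        rw [hPL, star_mul, star_mul, hP.star_eq, hL.star_eq, mul_assoc]
    _ = L * P := by rw [← hPL, star_mul, hP.star_eq, hL.star_eq]

lemma exists_norm_eq_one_conj_mul_eq_norm (c : ℂ) : ∃ l : ℂ, ‖l‖ = 1 ∧ conj l * c = ‖c‖ := by
  rcases eq_or_ne c 0 with rfl | hc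
  · exact ⟨1, by simp⟩
  · have hc' : (‖c‖ : ℂ) ≠ 0 := by exact_mod_cast norm_ne_zero_iff.mpr hc
    refine ⟨c / ‖c‖, by simp [hc], ?_⟩
    rw [map_div₀, Complex.conj_ofReal, div_mul_eq_mul_div, Complex.conj_mul', sq, mul_div_assoc,
      div_self hc', mul_one]

section Vectors

variable {E₁ E₂ : Type*}

@[simp]
lemma dvec_fst (x₁ : E₁) (x₂ : E₂) : (dvec x₁ x₂).fst = x₁ := rfl

@[simp]
lemma dvec_snd (x₁ : E₁) (x₂ : E₂) : (dvec x₁ x₂).snd = x₂ := rfl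

lemma dvec_fst_snd (v : WithLp 2 (E₁ × E₂)) : dvec v.fst v.snd = v := rfl

variable [NormedAddCommGroup E₁] [NormedAddCommGroup E₂]

lemma dvec_zero : dvec (0 : E₁) (0 : E₂) = 0 := rfl

lemma dvec_add (x₁ y₁ : E₁) (x₂ y₂ : E₂) :
    dvec x₁ x₂ + dvec y₁ y₂ = dvec (x₁ + y₁) (x₂ + y₂) := rfl

lemma dvec_sub (x₁ y₁ : E₁) (x₂ y₂ : E₂) :
    dvec x₁ x₂ - dvec y₁ y₂ = dvec (x₁ - y₁) (x₂ - y₂) := rfl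

lemma norm_dvec_sq (x₁ : E₁) (x₂ : E₂) : ‖dvec x₁ x₂‖ ^ 2 = ‖x₁‖ ^ 2 + ‖x₂‖ ^ 2 :=
  WithLp.prod_norm_sq_eq_of_L2 _

lemma norm_dvec_left (x₁ : E₁) : ‖dvec x₁ (0 : E₂)‖ = ‖x₁‖ :=
  WithLp.norm_toLp_fst 2 E₁ E₂ x₁

lemma norm_dvec_right (x₂ : E₂) : ‖dvec (0 : E₁) x₂‖ = ‖x₂‖ :=
  WithLp.norm_toLp_snd 2 E₁ E₂ x₂

variable [InnerProductSpace ℂ E₁] [InnerProductSpace ℂ E₂]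

lemma inner_dvec (x₁ y₁ : E₁) (x₂ y₂ : E₂) :
    inner ℂ (dvec x₁ x₂) (dvec y₁ y₂) = inner ℂ x₁ y₁ + inner ℂ x₂ y₂ := rfl

end Vectors

section Operators

variable {E₁ E₂ : Type*} [NormedAddCommGroup E₁] [InnerProductSpace ℂ E₁]
  [NormedAddCommGroup E₂] [InnerProductSpace ℂ E₂]

def dsumSet (𝓐₁ : Set (E₁ →L[ℂ] E₁)) (𝓐₂ : Set (E₂ →L[ℂ] E₂)) :
    Set (WithLp 2 (E₁ × E₂) →L[ℂ] WithLp 2 (E₁ × E₂)) :=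
  {T | ∃ T₁ ∈ 𝓐₁, ∃ T₂ ∈ 𝓐₂, T = dsum T₁ T₂}

@[simp]
lemma dsum_dvec (T₁ : E₁ →L[ℂ] E₁) (T₂ : E₂ →L[ℂ] E₂) (x₁ : E₁) (x₂ : E₂) :
    dsum T₁ T₂ (dvec x₁ x₂) = dvec (T₁ x₁) (T₂ x₂) := rfl

lemma dsum_zero : dsum (0 : E₁ →L[ℂ] E₁) (0 : E₂ →L[ℂ] E₂) = 0 := rfl

lemma dsum_mul (T₁ S₁ : E₁ →L[ℂ] E₁) (T₂ S₂ : E₂ →L[ℂ] E₂) :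
    dsum T₁ T₂ * dsum S₁ S₂ = dsum (T₁ * S₁) (T₂ * S₂) := rfl

lemma dsum_inj {T₁ S₁ : E₁ →L[ℂ] E₁} {T₂ S₂ : E₂ →L[ℂ] E₂} :
    dsum T₁ T₂ = dsum S₁ S₂ ↔ T₁ = S₁ ∧ T₂ = S₂ := by
  refine ⟨fun h => ⟨ContinuousLinearMap.ext fun x => ?_, ContinuousLinearMap.ext fun x => ?_⟩,
    fun ⟨h₁, h₂⟩ => h₁ ▸ h₂ ▸ rfl⟩
  · simpa using congr(($h (dvec x 0)).fst)
  · simpa using congr(($h (dvec 0 x)).snd)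

lemma norm_dsum (T₁ : E₁ →L[ℂ] E₁) (T₂ : E₂ →L[ℂ] E₂) :
    ‖dsum T₁ T₂‖ = max ‖T₁‖ ‖T₂‖ := by
  set M := max ‖T₁‖ ‖T₂‖
  apply le_antisymm
  · refine ContinuousLinearMap.opNorm_le_bound _ (by positivity) fun v => ?_
    refine le_of_pow_le_pow_left₀ two_ne_zero (by positivity) ?_
    calc ‖dsum T₁ T₂ v‖ ^ 2 = ‖T₁ v.fst‖ ^ 2 + ‖T₂ v.snd‖ ^ 2 := norm_dvec_sq _ _
      _ ≤ (M * ‖v.fst‖) ^ 2 + (M * ‖v.snd‖) ^ 2 := by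
        gcongr
        exacts [T₁.le_of_opNorm_le (le_max_left _ _) _, T₂.le_of_opNorm_le (le_max_right _ _) _]
      _ = (M * ‖v‖) ^ 2 := by
        rw [mul_pow, mul_pow, ← mul_add, ← norm_dvec_sq, dvec_fst_snd, mul_pow]
  · refine max_le (ContinuousLinearMap.opNorm_le_bound _ (norm_nonneg (dsum T₁ T₂)) fun x => ?_)
      (ContinuousLinearMap.opNorm_le_bound _ (norm_nonneg (dsum T₁ T₂)) fun x => ?_)
    · calc ‖T₁ x‖ = ‖(dsum T₁ T₂ (dvec x 0)).fst‖ := rfl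
        _ ≤ ‖dsum T₁ T₂ (dvec x 0)‖ := WithLp.norm_fst_le _ _
        _ ≤ ‖dsum T₁ T₂‖ * ‖x‖ := norm_dvec_left (E₂ := E₂) x ▸ (dsum T₁ T₂).le_opNorm _
    · calc ‖T₂ x‖ = ‖(dsum T₁ T₂ (dvec 0 x)).snd‖ := rfl
        _ ≤ ‖dsum T₁ T₂ (dvec 0 x)‖ := WithLp.norm_snd_le _ _
        _ ≤ ‖dsum T₁ T₂‖ * ‖x‖ := norm_dvec_right (E₁ := E₁) x ▸ (dsum T₁ T₂).le_opNorm _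

/-- The diagonal block `x₁ ↦ (A (x₁ ⊕ 0))₁` of `A`; `blockSnd` is the other one. -/
def blockFst (A : WithLp 2 (E₁ × E₂) →L[ℂ] WithLp 2 (E₁ × E₂)) : E₁ →L[ℂ] E₁ :=
  WithLp.fstL 2 ℂ E₁ E₂ ∘L A ∘L
    ((WithLp.prodContinuousLinearEquiv 2 ℂ E₁ E₂).symm : E₁ × E₂ →L[ℂ] WithLp 2 (E₁ × E₂)) ∘L
    ContinuousLinearMap.inl ℂ E₁ E₂

def blockSnd (A : WithLp 2 (E₁ × E₂) →L[ℂ] WithLp 2 (E₁ × E₂)) : E₂ →L[ℂ] E₂ :=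
  WithLp.sndL 2 ℂ E₁ E₂ ∘L A ∘L
    ((WithLp.prodContinuousLinearEquiv 2 ℂ E₁ E₂).symm : E₁ × E₂ →L[ℂ] WithLp 2 (E₁ × E₂)) ∘L
    ContinuousLinearMap.inr ℂ E₁ E₂

lemma eq_dsum_of_commute {A : WithLp 2 (E₁ × E₂) →L[ℂ] WithLp 2 (E₁ × E₂)}
    (h : Commute (dsum 1 0) A) : A = dsum (blockFst A) (blockSnd A) := by
  have hP : ∀ v, dsum 1 0 (A v) = A (dsum 1 0 v) := fun v => congr($(h.eq) v)
  refine ContinuousLinearMap.ext fun v => ?_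
  have h₁ : A (dvec v.fst 0) = dvec (blockFst A v.fst) 0 := (hP (dvec v.fst 0)).symm
  have h₂ : A (dvec 0 v.snd) = dvec 0 (blockSnd A v.snd) := by
    have hfst : (A (dvec 0 v.snd)).fst = 0 :=
      calc (A (dvec 0 v.snd)).fst = (dsum 1 0 (A (dvec 0 v.snd))).fst := rfl
        _ = (A (dvec 0 0)).fst := congr(($(hP (dvec 0 v.snd))).fst)
        _ = 0 := by rw [dvec_zero, map_zero]; rfl
    rw [← dvec_fst_snd (A _), hfst]
    rfl
  calc A v = A (dvec v.fst 0) + A (dvec 0 v.snd) := by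
        rw [← map_add, dvec_add, add_zero, zero_add, dvec_fst_snd]
    _ = dsum (blockFst A) (blockSnd A) v := by
        rw [h₁, h₂, dvec_add, add_zero, zero_add]
        rfl

variable [CompleteSpace E₁] [CompleteSpace E₂]

lemma star_dsum (T₁ : E₁ →L[ℂ] E₁) (T₂ : E₂ →L[ℂ] E₂) :
    star (dsum T₁ T₂) = dsum (star T₁) (star T₂) := by
  simp only [ContinuousLinearMap.star_eq_adjoint]
  refine ((ContinuousLinearMap.eq_adjoint_iff _ _).mpr fun u v => ?_).symm
  rw [← dvec_fst_snd u, ← dvec_fst_snd v, dsum_dvec, dsum_dvec, inner_dvec, inner_dvec,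
    ContinuousLinearMap.adjoint_inner_left, ContinuousLinearMap.adjoint_inner_left]

lemma isSelfAdjoint_dsum_iff {T₁ : E₁ →L[ℂ] E₁} {T₂ : E₂ →L[ℂ] E₂} :
    IsSelfAdjoint (dsum T₁ T₂) ↔ IsSelfAdjoint T₁ ∧ IsSelfAdjoint T₂ := by
  simp only [isSelfAdjoint_iff, star_dsum, dsum_inj]

lemma isOrthoProj_dsum_iff {L₁ : E₁ →L[ℂ] E₁} {L₂ : E₂ →L[ℂ] E₂} :
    IsOrthoProj (dsum L₁ L₂) ↔ IsOrthoProj L₁ ∧ IsOrthoProj L₂ := by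
  simp only [IsOrthoProj, isSelfAdjoint_dsum_iff, dsum_mul, dsum_inj]
  tauto

end Operators

section Lattice

variable {E₁ E₂ : Type*} [NormedAddCommGroup E₁] [InnerProductSpace ℂ E₁] [CompleteSpace E₁]
  [NormedAddCommGroup E₂] [InnerProductSpace ℂ E₂] [CompleteSpace E₂]

lemma zero_mem_latOf {E : Type*} [NormedAddCommGroup E] [InnerProductSpace ℂ E] [CompleteSpace E]
    (𝓐 : Set (E →L[ℂ] E)) : 0 ∈ latOf 𝓐 :=
  ⟨⟨IsSelfAdjoint.zero _, mul_zero 0⟩, fun _ _ => mul_zero _⟩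

lemma dsum_mem_latOf_dsumSet_iff {𝓐₁ : Set (E₁ →L[ℂ] E₁)} {𝓐₂ : Set (E₂ →L[ℂ] E₂)}
    (h₁ : 0 ∈ 𝓐₁) (h₂ : 0 ∈ 𝓐₂) {L₁ : E₁ →L[ℂ] E₁} {L₂ : E₂ →L[ℂ] E₂} :
    dsum L₁ L₂ ∈ latOf (dsumSet 𝓐₁ 𝓐₂) ↔ L₁ ∈ latOf 𝓐₁ ∧ L₂ ∈ latOf 𝓐₂ := by
  have hblock : ∀ T₁ T₂, (1 - dsum L₁ L₂) * dsum T₁ T₂ * dsum L₁ L₂ =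
      dsum ((1 - L₁) * T₁ * L₁) ((1 - L₂) * T₂ * L₂) := fun _ _ => rfl
  simp only [latOf, Set.mem_ofPred_eq, isOrthoProj_dsum_iff, dsumSet]
  constructor
  · rintro ⟨⟨hL₁, hL₂⟩, hinv⟩
    refine ⟨⟨hL₁, fun T₁ hT₁ => ?_⟩, ⟨hL₂, fun T₂ hT₂ => ?_⟩⟩
    · have := hinv _ ⟨T₁, hT₁, 0, h₂, rfl⟩
      rw [hblock, ← dsum_zero, dsum_inj] at this
      exact this.1
    · have := hinv _ ⟨0, h₁, T₂, hT₂, rfl⟩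
      rw [hblock, ← dsum_zero, dsum_inj] at this
      exact this.2
  · rintro ⟨⟨hL₁, hinv₁⟩, ⟨hL₂, hinv₂⟩⟩
    refine ⟨⟨hL₁, hL₂⟩, ?_⟩
    rintro _ ⟨T₁, hT₁, T₂, hT₂, rfl⟩
    rw [hblock, hinv₁ T₁ hT₁, hinv₂ T₂ hT₂, dsum_zero]

lemma latOf_dsumSet (𝓐₁ : Subalgebra ℂ (E₁ →L[ℂ] E₁)) (𝓐₂ : Subalgebra ℂ (E₂ →L[ℂ] E₂)) :
    latOf (H := WithLp 2 (E₁ × E₂)) (dsumSet 𝓐₁ 𝓐₂) = dsumSet (latOf 𝓐₁) (latOf 𝓐₂) := by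
  ext L
  constructor
  · intro hL
    have hP : IsSelfAdjoint (dsum (1 : E₁ →L[ℂ] E₁) (0 : E₂ →L[ℂ] E₂)) :=
      isSelfAdjoint_dsum_iff.mpr ⟨.one _, .zero _⟩
    have hLP := commute_of_one_sub_mul_mul_eq_zero hP hL.1.1
      (hL.2 _ ⟨1, 𝓐₁.one_mem, 0, 𝓐₂.zero_mem, rfl⟩)
    have hLd := eq_dsum_of_commute hLP
    rw [hLd, dsum_mem_latOf_dsumSet_iff 𝓐₁.zero_mem 𝓐₂.zero_mem] at hL
    exact ⟨_, hL.1, _, hL.2, hLd⟩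
  · rintro ⟨L₁, hL₁, L₂, hL₂, rfl⟩
    exact (dsum_mem_latOf_dsumSet_iff 𝓐₁.zero_mem 𝓐₂.zero_mem).mpr ⟨hL₁, hL₂⟩

end Lattice

section VectorFunctionals

variable {E E₁ E₂ : Type*} [NormedAddCommGroup E] [InnerProductSpace ℂ E]
  [NormedAddCommGroup E₁] [InnerProductSpace ℂ E₁] [NormedAddCommGroup E₂] [InnerProductSpace ℂ E₂]

def omegaValues (𝓐 : Set (E →L[ℂ] E)) (x y : E) : Set ℝ :=
  {r | ∃ T ∈ 𝓐, ‖T‖ ≤ 1 ∧ r = ‖(inner ℂ (T x) y : ℂ)‖}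

lemma omegaNorm_eq_sSup (𝓐 : Set (E →L[ℂ] E)) (x y : E) :
    omegaNorm 𝓐 x y = sSup (omegaValues 𝓐 x y) := rfl

lemma bddAbove_omegaValues (𝓐 : Set (E →L[ℂ] E)) (x y : E) :
    BddAbove (omegaValues 𝓐 x y) := by
  refine ⟨‖x‖ * ‖y‖, ?_⟩
  rintro _ ⟨T, -, hT, rfl⟩
  calc ‖(inner ℂ (T x) y : ℂ)‖ ≤ ‖T x‖ * ‖y‖ := norm_inner_le_norm _ _
    _ ≤ 1 * ‖x‖ * ‖y‖ := by gcongr; exact T.le_of_opNorm_le hT x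
    _ = ‖x‖ * ‖y‖ := by rw [one_mul]

lemma omegaValues_nonempty {𝓐 : Set (E →L[ℂ] E)} (h : 0 ∈ 𝓐) (x y : E) :
    (omegaValues 𝓐 x y).Nonempty :=
  ⟨0, 0, h, by simp, by simp⟩

lemma exists_inner_eq_norm_inner {𝓐 : Submodule ℂ (E →L[ℂ] E)} {T : E →L[ℂ] E} (hT : T ∈ 𝓐)
    (hT₁ : ‖T‖ ≤ 1) (x y : E) :
    ∃ S ∈ 𝓐, ‖S‖ ≤ 1 ∧ inner ℂ (S x) y = (‖(inner ℂ (T x) y : ℂ)‖ : ℂ) := by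
  obtain ⟨l, hl, hlc⟩ := exists_norm_eq_one_conj_mul_eq_norm (inner ℂ (T x) y)
  refine ⟨l • T, 𝓐.smul_mem l hT, by rwa [norm_smul, hl, one_mul], ?_⟩
  rw [FunLike.coe_smul, Pi.smul_apply, inner_smul_left, hlc]

lemma omegaValues_add_subset (𝓐₁ : Submodule ℂ (E₁ →L[ℂ] E₁))
    (𝓐₂ : Submodule ℂ (E₂ →L[ℂ] E₂)) (x₁ y₁ : E₁) (x₂ y₂ : E₂) :
    omegaValues 𝓐₁ x₁ y₁ + omegaValues 𝓐₂ x₂ y₂ ⊆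
      omegaValues (dsumSet 𝓐₁ 𝓐₂) (dvec x₁ x₂) (dvec y₁ y₂) := by
  rintro _ ⟨_, ⟨T₁, hT₁, hT₁', rfl⟩, _, ⟨T₂, hT₂, hT₂', rfl⟩, rfl⟩
  obtain ⟨S₁, hS₁, hS₁', e₁⟩ := exists_inner_eq_norm_inner hT₁ hT₁' x₁ y₁
  obtain ⟨S₂, hS₂, hS₂', e₂⟩ := exists_inner_eq_norm_inner hT₂ hT₂' x₂ y₂
  refine ⟨dsum S₁ S₂, ⟨S₁, hS₁, S₂, hS₂, rfl⟩, by rw [norm_dsum]; exact max_le hS₁' hS₂', ?_⟩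
  rw [dsum_dvec, inner_dvec, e₁, e₂, ← Complex.ofReal_add, Complex.norm_real,
    Real.norm_of_nonneg (by positivity)]

lemma omegaNorm_dsumSet (𝓐₁ : Submodule ℂ (E₁ →L[ℂ] E₁)) (𝓐₂ : Submodule ℂ (E₂ →L[ℂ] E₂))
    (x₁ y₁ : E₁) (x₂ y₂ : E₂) :
    omegaNorm (dsumSet 𝓐₁ 𝓐₂) (dvec x₁ x₂) (dvec y₁ y₂) =
      omegaNorm 𝓐₁ x₁ y₁ + omegaNorm 𝓐₂ x₂ y₂ := by
  have hne₁ := omegaValues_nonempty 𝓐₁.zero_mem x₁ y₁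
  have hne₂ := omegaValues_nonempty 𝓐₂.zero_mem x₂ y₂
  simp only [omegaNorm_eq_sSup]
  rw [← csSup_add hne₁ (bddAbove_omegaValues _ _ _) hne₂ (bddAbove_omegaValues _ _ _)]
  have hne : (omegaValues (dsumSet 𝓐₁ 𝓐₂) (dvec x₁ x₂) (dvec y₁ y₂)).Nonempty := by
    refine omegaValues_nonempty ?_ _ _
    exact ⟨0, 𝓐₁.zero_mem, 0, 𝓐₂.zero_mem, dsum_zero.symm⟩
  refine le_antisymm (csSup_le hne ?_) <| csSup_le_csSup (bddAbove_omegaValues _ _ _)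
    (hne₁.add hne₂) (omegaValues_add_subset 𝓐₁ 𝓐₂ x₁ y₁ x₂ y₂)
  rintro _ ⟨_, ⟨T₁, hT₁, T₂, hT₂, rfl⟩, hT, rfl⟩
  rw [norm_dsum, max_le_iff] at hT
  calc ‖(inner ℂ (dsum T₁ T₂ (dvec x₁ x₂)) (dvec y₁ y₂) : ℂ)‖
      ≤ ‖(inner ℂ (T₁ x₁) y₁ : ℂ)‖ + ‖(inner ℂ (T₂ x₂) y₂ : ℂ)‖ := norm_add_le _ _
    _ ≤ _ := le_csSup ((bddAbove_omegaValues _ _ _).add (bddAbove_omegaValues _ _ _))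
        (Set.add_mem_add ⟨T₁, hT₁, hT.1, rfl⟩ ⟨T₂, hT₂, hT.2, rfl⟩)

end VectorFunctionals

section PropertyV

variable {E E₁ E₂ : Type*} [NormedAddCommGroup E] [InnerProductSpace ℂ E] [CompleteSpace E]
  [NormedAddCommGroup E₁] [InnerProductSpace ℂ E₁] [CompleteSpace E₁]
  [NormedAddCommGroup E₂] [InnerProductSpace ℂ E₂] [CompleteSpace E₂]

def latValues (𝓐 : Set (E →L[ℂ] E)) (x y : E) : Set ℝ :=
  {r | ∃ L ∈ latOf 𝓐, r = ‖x - L x‖ ^ 2 + ‖L y‖ ^ 2}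

lemma propertyV_iff (𝓐 : Set (E →L[ℂ] E)) :
    PropertyV 𝓐 ↔ ∀ x y, sInf (latValues 𝓐 x y) ≤ omegaNorm 𝓐 x y := Iff.rfl

lemma latValues_nonempty (𝓐 : Set (E →L[ℂ] E)) (x y : E) : (latValues 𝓐 x y).Nonempty :=
  ⟨_, 0, zero_mem_latOf 𝓐, rfl⟩

lemma bddBelow_latValues (𝓐 : Set (E →L[ℂ] E)) (x y : E) : BddBelow (latValues 𝓐 x y) :=
  ⟨0, by rintro _ ⟨L, -, rfl⟩; positivity⟩

lemma latValues_add_subset {𝓐₁ : Set (E₁ →L[ℂ] E₁)} {𝓐₂ : Set (E₂ →L[ℂ] E₂)}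
    (h₁ : 0 ∈ 𝓐₁) (h₂ : 0 ∈ 𝓐₂) (x₁ y₁ : E₁) (x₂ y₂ : E₂) :
    latValues 𝓐₁ x₁ y₁ + latValues 𝓐₂ x₂ y₂ ⊆
      latValues (dsumSet 𝓐₁ 𝓐₂) (dvec x₁ x₂) (dvec y₁ y₂) := by
  rintro _ ⟨_, ⟨L₁, hL₁, rfl⟩, _, ⟨L₂, hL₂, rfl⟩, rfl⟩
  refine ⟨dsum L₁ L₂, (dsum_mem_latOf_dsumSet_iff h₁ h₂).mpr ⟨hL₁, hL₂⟩, ?_⟩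
  rw [dsum_dvec, dsum_dvec, dvec_sub, norm_dvec_sq, norm_dvec_sq]
  ring

lemma propertyV_dsumSet {𝓐₁ : Submodule ℂ (E₁ →L[ℂ] E₁)} {𝓐₂ : Submodule ℂ (E₂ →L[ℂ] E₂)}
    (h₁ : PropertyV (𝓐₁ : Set (E₁ →L[ℂ] E₁))) (h₂ : PropertyV (𝓐₂ : Set (E₂ →L[ℂ] E₂))) :
    PropertyV (H := WithLp 2 (E₁ × E₂)) (dsumSet 𝓐₁ 𝓐₂) := by
  refine (propertyV_iff _).mpr fun x y => ?_
  rw [← dvec_fst_snd x, ← dvec_fst_snd y, omegaNorm_dsumSet]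
  calc sInf (latValues (dsumSet 𝓐₁ 𝓐₂) (dvec x.fst x.snd) (dvec y.fst y.snd))
      ≤ sInf (latValues 𝓐₁ x.fst y.fst + latValues 𝓐₂ x.snd y.snd) :=
        csInf_le_csInf (bddBelow_latValues _ _ _)
          ((latValues_nonempty _ _ _).add (latValues_nonempty _ _ _))
          (latValues_add_subset 𝓐₁.zero_mem 𝓐₂.zero_mem _ _ _ _)
    _ = sInf (latValues 𝓐₁ x.fst y.fst) + sInf (latValues 𝓐₂ x.snd y.snd) :=
        csInf_add (latValues_nonempty _ _ _) (bddBelow_latValues _ _ _)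
          (latValues_nonempty _ _ _) (bddBelow_latValues _ _ _)
    _ ≤ omegaNorm 𝓐₁ x.fst y.fst + omegaNorm 𝓐₂ x.snd y.snd := add_le_add (h₁ _ _) (h₂ _ _)

end PropertyV

/-- If unital operator algebras `𝓐₁ ⊆ B(H₁)` and `𝓐₂ ⊆ B(H₂)` possess
property (V), then so does `𝓐 = 𝓐₁ ⊕ 𝓐₂`; moreover
`Lat 𝓐 = {L₁ ⊕ L₂ : L₁ ∈ Lat 𝓐₁, L₂ ∈ Lat 𝓐₂}` and
`‖ω_{x,y}|_𝓐‖ = ‖ω_{x₁,y₁}|_{𝓐₁}‖ + ‖ω_{x₂,y₂}|_{𝓐₂}‖`. -/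
theorem norms_of_vector_functionals_stmt10
    (𝓐₁ : Subalgebra ℂ (H₁ →L[ℂ] H₁)) (𝓐₂ : Subalgebra ℂ (H₂ →L[ℂ] H₂))
    (h₁ : PropertyV (𝓐₁ : Set (H₁ →L[ℂ] H₁))) (h₂ : PropertyV (𝓐₂ : Set (H₂ →L[ℂ] H₂))) :
    PropertyV {T | ∃ T₁ ∈ 𝓐₁, ∃ T₂ ∈ 𝓐₂, T = dsum T₁ T₂} ∧
    latOf {T | ∃ T₁ ∈ 𝓐₁, ∃ T₂ ∈ 𝓐₂, T = dsum T₁ T₂} =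
      {L | ∃ L₁ ∈ latOf (𝓐₁ : Set (H₁ →L[ℂ] H₁)), ∃ L₂ ∈ latOf (𝓐₂ : Set (H₂ →L[ℂ] H₂)),
        L = dsum L₁ L₂} ∧
    ∀ (x₁ y₁ : H₁) (x₂ y₂ : H₂),
      omegaNorm {T | ∃ T₁ ∈ 𝓐₁, ∃ T₂ ∈ 𝓐₂, T = dsum T₁ T₂} (dvec x₁ x₂) (dvec y₁ y₂) =
        omegaNorm (𝓐₁ : Set (H₁ →L[ℂ] H₁)) x₁ y₁ +
          omegaNorm (𝓐₂ : Set (H₂ →L[ℂ] H₂)) x₂ y₂ :=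
  ⟨propertyV_dsumSet (𝓐₁ := 𝓐₁.toSubmodule) (𝓐₂ := 𝓐₂.toSubmodule) h₁ h₂,
    latOf_dsumSet 𝓐₁ 𝓐₂, omegaNorm_dsumSet 𝓐₁.toSubmodule 𝓐₂.toSubmodule⟩
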